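/- arXiv:2301.03776 — 4 statements merged into one kernel-verified Lean document; each statement's English description precedes it below -/
import Mathlib

section
/- Let M be a matroid and let R be a round flat of M. Then the tree-width of M is at least r(R). -/
open Set

namespace Matroid

variable {α : Type*} {β : Type*}

/-- The rank of a set in a matroid: the supremum of sizes of independent subsets. -/
noncomputable def mRank (M : Matroid α) (X : Set α) : ℕ :=
  sSup {n : ℕ | ∃ I, M.Indep I ∧ I ⊆ X ∧ I.ncard = n}

/-- The rank of a matroid. -/
noncomputable def mRk (M : Matroid α) : ℕ := M.mRank M.E

/-- A flat `F` is modular if `r F + r F' = r (F ∪ F') + r (F ∩ F')` for every flat `F'`. -/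
def IsModularFlat (M : Matroid α) (F : Set α) : Prop :=
  M.IsFlat F ∧ ∀ F', M.IsFlat F' →
    M.mRank F + M.mRank F' = M.mRank (F ∪ F') + M.mRank (F ∩ F')

/-- A proper flat is a flat other than the ground set. -/
def IsProperFlat (M : Matroid α) (F : Set α) : Prop := M.IsFlat F ∧ F ≠ M.E

/-- A vertical cover is a pair of proper flats whose union is the ground set. -/
def VerticalCover (M : Matroid α) (F F' : Set α) : Prop :=
  M.IsProperFlat F ∧ M.IsProperFlat F' ∧ F ∪ F' = M.E

/-- A modular cover is a vertical cover by two modular flats. -/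
def ModularCover (M : Matroid α) (F F' : Set α) : Prop :=
  M.VerticalCover F F' ∧ M.IsModularFlat F ∧ M.IsModularFlat F'

/-- A matroid is round if it has no vertical cover. -/
def Round (M : Matroid α) : Prop := ∀ F F', ¬ M.VerticalCover F F'

/-- A subset of the ground set is round if the restriction to it is round. -/
def RoundSet (M : Matroid α) (X : Set α) : Prop := X ⊆ M.E ∧ (M ↾ X).Round

/-- A rotunda is a maximal round flat. -/
def Rotunda (M : Matroid α) (R : Set α) : Prop :=
  M.IsFlat R ∧ M.RoundSet R ∧ ∀ R', M.IsFlat R' → M.RoundSet R' → R ⊆ R' → R' = R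

/-- A matroid of rank `r` is supersolvable if there is a chain of modular flats
`F 0 ⊆ F 1 ⊆ ⋯ ⊆ F r` with `r (F i) = i` for each `i`. -/
def Supersolvable (M : Matroid α) : Prop :=
  ∃ F : ℕ → Set α, (∀ i ≤ M.mRk, M.IsModularFlat (F i) ∧ M.mRank (F i) = i) ∧
    ∀ i < M.mRk, F i ⊆ F (i + 1)

/-- A matroid is saturated if every round flat is modular. -/
def Saturated (M : Matroid α) : Prop :=
  ∀ F, M.IsFlat F → M.RoundSet F → M.IsModularFlat F

/-- A circuit: a minimal dependent subset of the ground set. -/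
def Circ (M : Matroid α) (C : Set α) : Prop :=
  C ⊆ M.E ∧ ¬ M.Indep C ∧ ∀ D ⊂ C, M.Indep D

/-- A matroid is connected if it is non-empty and every two distinct elements lie in a
common circuit. -/
def ConnectedM (M : Matroid α) : Prop :=
  M.E.Nonempty ∧ ∀ x ∈ M.E, ∀ y ∈ M.E, x = y ∨ ∃ C, M.Circ C ∧ x ∈ C ∧ y ∈ C

/-- A hyperplane: a flat of rank `r M - 1`. -/
def IsHyperplane (M : Matroid α) (H : Set α) : Prop :=
  M.IsFlat H ∧ M.mRank H + 1 = M.mRk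

/-- The union of the projections `P_H(x, y) = H ∩ cl (x ∪ y)` onto the modular hyperplane `H`,
taken over all pairs of distinct rank-one flats `x = cl {a}`, `y = cl {b}` spanned by
elements `a, b` of `X`. -/
def projUnion (M : Matroid α) (H X : Set α) : Set α :=
  ⋃ a ∈ X, ⋃ b ∈ X, ⋃ (_ : M.closure {a} ≠ M.closure {b}), H ∩ M.closure {a, b}

/-- Two elements are related if they are equal or lie in a common circuit; the connected
components of a matroid are the restrictions to the equivalence classes of this relation. -/
def connRel (M : Matroid α) (x y : α) : Prop :=
  x = y ∨ ∃ C, M.Circ C ∧ x ∈ C ∧ y ∈ C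

/-- The rotunda graph of a matroid: vertices are the rotunda; two rotunda are adjacent if
they intersect and there is a modular cover separating them at their intersection. -/
def rotundaGraph (M : Matroid α) : SimpleGraph {R : Set α // M.Rotunda R} where
  Adj R₁ R₂ := R₁ ≠ R₂ ∧ (R₁.1 ∩ R₂.1).Nonempty ∧
    ∃ F₁ F₂, M.ModularCover F₁ F₂ ∧ R₁.1 ⊆ F₁ ∧ R₂.1 ⊆ F₂ ∧ F₁ ∩ F₂ = R₁.1 ∩ R₂.1
  symm := ⟨by
    rintro a b ⟨hne, hint, F₁, F₂, ⟨⟨hp1, hp2, hu⟩, hm1, hm2⟩, h1, h2, hi⟩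
    refine ⟨hne.symm, by rwa [Set.inter_comm], F₂, F₁,
      ⟨⟨hp2, hp1, by rwa [Set.union_comm]⟩, hm2, hm1⟩, h2, h1, ?_⟩
    rw [Set.inter_comm, hi, Set.inter_comm]⟩
  loopless := ⟨fun a h => h.1 rfl⟩

/-- A rotunda tree of `M`: a tree on the rotunda of `M` such that for each element `x` of the
ground set, the rotunda containing `x` induce a (nonempty) subtree. -/
def IsRotundaTree (M : Matroid α) (T : SimpleGraph {R : Set α // M.Rotunda R}) : Prop :=
  T.IsTree ∧ ∀ x ∈ M.E, (T.induce {t : {R : Set α // M.Rotunda R} | x ∈ t.1}).Connected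

/-- A legitimate weighting of `M`: zero on the empty set, and strictly monotone under proper
inclusion on the set consisting of `∅` and the pairwise intersections of distinct rotunda. -/
def LegitimateWeighting (M : Matroid α) (σ : Set α → ℕ) : Prop :=
  σ ∅ = 0 ∧
  ∀ X X' : Set α,
    (X = ∅ ∨ ∃ R R', M.Rotunda R ∧ M.Rotunda R' ∧ R ≠ R' ∧ X = R ∩ R') →
    (X' = ∅ ∨ ∃ R R', M.Rotunda R ∧ M.Rotunda R' ∧ R ≠ R' ∧ X' = R ∩ R') →
    X ⊂ X' → σ X < σ X'

/-- The total weight of a graph on the rotunda of `M`, where the edge joining rotunda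
`R` and `R'` gets weight `σ (R ∩ R')`. -/
noncomputable def treeWeight {M : Matroid α} (σ : Set α → ℕ)
    (T : SimpleGraph {R : Set α // M.Rotunda R}) : ℕ :=
  ∑ᶠ e ∈ T.edgeSet,
    Sym2.lift ⟨fun a b => σ (a.1 ∩ b.1), fun a b => by simp [Set.inter_comm]⟩ e

/-- A tree-decomposition of a matroid: a tree together with bags covering the ground set. -/
def IsTreeDecomp (M : Matroid α) (T : SimpleGraph β) (τ : β → Set α) : Prop :=
  T.IsTree ∧ ∀ x ∈ M.E, ∃ t, x ∈ τ t

/-- The node-width of a node `t` in a tree-decomposition `(T, τ)` of `M`: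
`(Σ_i r (τ t ∪ ⋃_{k ≠ i} F_k)) − (d − 1) · r M`, where `F_1, …, F_d` are the unions of the
bags over the connected components of `T − t`. -/
noncomputable def nodeWidth (M : Matroid α) (T : SimpleGraph β) (τ : β → Set α) (t : β) : ℤ :=
  (∑ᶠ c : (T.induce {s : β | s ≠ t}).ConnectedComponent,
      (M.mRank (τ t ∪ ⋃ (s : {s : β // s ≠ t})
        (_ : (T.induce {s : β | s ≠ t}).connectedComponentMk s ≠ c), τ s.1) : ℤ))
    - ((Nat.card (T.induce {s : β | s ≠ t}).ConnectedComponent : ℤ) - 1) * (M.mRk : ℤ)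

/-- The width of a tree-decomposition: the maximum node-width. -/
noncomputable def decompWidth (M : Matroid α) (T : SimpleGraph β) (τ : β → Set α) : ℤ :=
  sSup (Set.range (M.nodeWidth T τ))

/-- The tree-width of a matroid: the minimum width of a (finite) tree-decomposition. -/
noncomputable def treeWidth (M : Matroid α) : ℕ :=
  sInf {n : ℕ | ∃ (β : Type) (T : SimpleGraph β) (τ : β → Set α),
    Finite β ∧ M.IsTreeDecomp T τ ∧ ∀ t, M.nodeWidth T τ t ≤ (n : ℤ)}

end Matroid

namespace SimpleGraph

/-- A graph is chordal if every cycle with at least four edges has a chord: an edge of the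
graph joining two vertices of the cycle that is not an edge of the cycle. -/
def IsChordal {V : Type*} (G : SimpleGraph V) : Prop :=
  ∀ ⦃v : V⦄ (w : G.Walk v v), w.IsCycle → 4 ≤ w.length →
    ∃ x y, x ∈ w.support ∧ y ∈ w.support ∧ G.Adj x y ∧ s(x, y) ∉ w.edges

/-- A maximal clique of a graph. -/
def MaxClique {V : Type*} (G : SimpleGraph V) (C : Set V) : Prop :=
  G.IsClique C ∧ ∀ D, G.IsClique D → C ⊆ D → D = C

/-- The reduced clique graph of a graph: vertices are the maximal cliques; two maximal
cliques are adjacent if they intersect and every walk from one side to the other passes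
through their intersection. -/
def reducedCliqueGraph {V : Type*} (G : SimpleGraph V) :
    SimpleGraph {C : Set V // G.MaxClique C} where
  Adj C₁ C₂ := C₁ ≠ C₂ ∧ (C₁.1 ∩ C₂.1).Nonempty ∧
    ∀ u ∈ C₁.1 \ C₂.1, ∀ v ∈ C₂.1 \ C₁.1, ∀ p : G.Walk u v,
      ∃ z ∈ p.support, z ∈ C₁.1 ∩ C₂.1
  symm := ⟨by
    rintro a b ⟨hne, hint, hsep⟩
    refine ⟨hne.symm, by rwa [Set.inter_comm], fun u hu v hv p => ?_⟩
    obtain ⟨z, hz, hz2⟩ := hsep v hv u hu p.reverse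
    refine ⟨z, ?_, by rwa [Set.inter_comm]⟩
    simpa [SimpleGraph.Walk.support_reverse] using hz⟩
  loopless := ⟨fun a h => h.1 rfl⟩

end SimpleGraph

open Matroid

/-!
Let `(T, τ)` be a tree-decomposition and call a set `W` of nodes spanning if `R ⊆ cl (τ W)`.
The bags cover `R` and `R` is round, so `W` or its complement spans. Hence some node `t` has the
complement of every branch of `T - t` spanning: otherwise take a branch `B` at `t` that is minimal
among branches with non-spanning complement. Then `B` spans, and at the neighbour `s` of `t` in
`B`, a branch with non-spanning complement either is the branch containing `t`, which lies in
`Bᶜ`, or lies strictly inside `B`. The complements `A_i = τ t ∪ ⋃_{k ≠ i} F_k` of the branches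
at `t` pairwise cover `E`, so repeated submodularity gives `r (⋂ cl A_i) + d r M ≤ Σ r A_i + r M`;
as `R ⊆ ⋂ cl A_i`, the node-width of `t` is at least `r R`.
-/

namespace Matroid

variable {α : Type*} {M : Matroid α} {R U V : Set α}

lemma cast_mRank [M.RankFinite] (X : Set α) : (M.mRank X : ℕ∞) = M.eRk X := by
  obtain ⟨I, hI⟩ := M.exists_isBasis' X
  have hIfin : I.Finite := hI.indep.finite
  have hgreatest : IsGreatest {n : ℕ | ∃ J, M.Indep J ∧ J ⊆ X ∧ J.ncard = n} I.ncard := by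
    refine ⟨⟨I, hI.indep, hI.subset, rfl⟩, ?_⟩
    rintro _ ⟨J, hJ, hJX, rfl⟩
    rw [← Nat.cast_le (α := ℕ∞), hJ.finite.cast_ncard_eq, hIfin.cast_ncard_eq, hI.encard_eq_eRk]
    exact hJ.encard_le_eRk_of_subset hJX
  rw [mRank, hgreatest.csSup_eq, hIfin.cast_ncard_eq, hI.encard_eq_eRk]

lemma cast_mRk [M.RankFinite] : (M.mRk : ℕ∞) = M.eRank := by
  rw [mRk, cast_mRank, eRk_ground]

lemma RoundSet.subset_closure_or_subset_closure (hR : M.RoundSet R) (hRUV : R ⊆ U ∪ V) :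
    R ⊆ M.closure U ∨ R ⊆ M.closure V := by
  obtain ⟨hRE, hround⟩ := hR
  have hcl (W : Set α) : (M ↾ R).closure (W ∩ R) ⊆ M.closure W := by
    rw [restrict_closure_eq _ inter_subset_right hRE]
    exact inter_subset_left.trans (M.closure_subset_closure inter_subset_left)
  have hproper (W : Set α) (hW : ¬ R ⊆ M.closure W) :
      (M ↾ R).IsProperFlat ((M ↾ R).closure (W ∩ R)) :=
    ⟨isFlat_closure _, fun h => hW (by simpa only [h, restrict_ground_eq] using hcl W)⟩
  by_contra! h
  refine hround _ _ ⟨hproper U h.1, hproper V h.2, ?_⟩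
  refine (union_subset (closure_subset_ground _ _) (closure_subset_ground _ _)).antisymm
    fun x hx => ?_
  rcases hRUV hx with hxU | hxV
  · exact Or.inl ((M ↾ R).subset_closure (U ∩ R) inter_subset_right ⟨hxU, hx⟩)
  · exact Or.inr ((M ↾ R).subset_closure (V ∩ R) inter_subset_right ⟨hxV, hx⟩)

lemma eRk_biInter_closure_add_card_mul_le {ι : Type*} (M : Matroid α) (A : ι → Set α)
    (S : Finset ι) (hA : (S : Set ι).Pairwise fun i j => M.E ⊆ A i ∪ A j) :
    M.eRk (⋂ i ∈ S, M.closure (A i)) + S.card * M.eRank ≤ ∑ i ∈ S, M.eRk (A i) + M.eRank := by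
  classical
  induction S using Finset.cons_induction with
  | empty => simp [eRk_univ_eq]
  | cons j S hj ih =>
    rw [Finset.coe_cons, Set.pairwise_insert] at hA
    set D := ⋂ i ∈ S, M.closure (A i)
    -- an element outside `cl (A j)` lies in every other `A i`
    have hspan : M.eRk (M.closure (A j) ∪ D) = M.eRank := by
      refine eRk_eq_eRank fun e he => ?_
      by_cases hej : e ∈ M.closure (A j)
      · exact Or.inl hej
      refine Or.inr (mem_iInter₂.2 fun i hi => ?_)
      have hij : j ≠ i := fun h => hj (h ▸ hi)
      exact M.mem_closure_of_mem' (((hA.2 i hi hij).1 he).resolve_left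
        fun h => hej (M.mem_closure_of_mem' h he)) he
    have hsub := M.eRk_inter_add_eRk_union_le (M.closure (A j)) D
    rw [hspan, eRk_closure_eq] at hsub
    calc M.eRk (⋂ i ∈ Finset.cons j S hj, M.closure (A i)) + (Finset.cons j S hj).card * M.eRank
        = M.eRk (M.closure (A j) ∩ D) + M.eRank + S.card * M.eRank := by
          rw [Finset.cons_eq_insert, Finset.set_biInter_insert, Finset.card_insert_of_notMem hj]
          push_cast
          ring
      _ ≤ M.eRk (A j) + (M.eRk D + S.card * M.eRank) := by
          rw [← add_assoc]
          gcongr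
      _ ≤ M.eRk (A j) + (∑ i ∈ S, M.eRk (A i) + M.eRank) := add_le_add_right (ih hA.1) _
      _ = ∑ i ∈ Finset.cons j S hj, M.eRk (A i) + M.eRank := by
          rw [Finset.sum_cons, add_assoc]

end Matroid

namespace SimpleGraph

variable {V : Type*} {G : SimpleGraph V} {s t v w : V}
  {c c' : (G.induce {s | s ≠ t}).ConnectedComponent}

def branch (G : SimpleGraph V) (t : V) (c : (G.induce {s | s ≠ t}).ConnectedComponent) :
    Set V :=
  Subtype.val '' c.supp

lemma mem_branch_iff :
    v ∈ G.branch t c ↔ ∃ h : v ≠ t, (G.induce {s | s ≠ t}).connectedComponentMk ⟨v, h⟩ = c := by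
  simp [branch]

lemma mem_branch_connectedComponentMk (h : v ≠ t) :
    v ∈ G.branch t ((G.induce {s | s ≠ t}).connectedComponentMk ⟨v, h⟩) :=
  mem_branch_iff.2 ⟨h, rfl⟩

lemma notMem_branch_self (c : (G.induce {s | s ≠ t}).ConnectedComponent) : t ∉ G.branch t c :=
  fun h => (mem_branch_iff.1 h).1 rfl

lemma disjoint_branch (h : c ≠ c') : Disjoint (G.branch t c) (G.branch t c') :=
  (disjoint_image_iff Subtype.val_injective).2 (pairwise_disjoint_supp_connectedComponent _ h)

lemma biUnion_compl_branch {α : Type*} (f : V → Set α)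
    (c : (G.induce {s | s ≠ t}).ConnectedComponent) :
    ⋃ v ∈ (G.branch t c)ᶜ, f v = f t ∪ ⋃ (s : {s : V // s ≠ t})
      (_ : (G.induce {s : V | s ≠ t}).connectedComponentMk s ≠ c), f s.1 := by
  ext x
  simp only [mem_iUnion, mem_compl_iff, mem_branch_iff, mem_union, not_exists, exists_prop]
  constructor
  · rintro ⟨v, hv, hx⟩
    by_cases hvt : v = t
    · exact Or.inl (hvt ▸ hx)
    · exact Or.inr ⟨⟨v, hvt⟩, hv hvt, hx⟩
  · rintro (hx | ⟨⟨v, hvt⟩, hvc, hx⟩)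
    · exact ⟨t, fun h => (h rfl).elim, hx⟩
    · exact ⟨v, fun _ => hvc, hx⟩

lemma mem_branch_of_adj (hw : w ∈ G.branch t c) (hv : v ≠ t) (hvw : G.Adj v w) :
    v ∈ G.branch t c := by
  obtain ⟨hw, rfl⟩ := mem_branch_iff.1 hw
  exact mem_branch_iff.2
    ⟨hv, ConnectedComponent.connectedComponentMk_eq_of_adj (G := G.induce _) hvw⟩

lemma exists_walk_of_mem_branch (hv : v ∈ G.branch t c) (hw : w ∈ G.branch t c) :
    ∃ p : G.Walk v w, t ∉ p.support := by
  obtain ⟨hv, rfl⟩ := mem_branch_iff.1 hv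
  obtain ⟨hw, hwc⟩ := mem_branch_iff.1 hw
  obtain ⟨p⟩ := ConnectedComponent.exact hwc.symm
  have hp : t ∉ (p.map (Embedding.induce {s | s ≠ t}).toHom).support := by
    rw [Walk.support_map, List.mem_map]
    rintro ⟨x, -, hx⟩
    exact x.2 hx
  exact ⟨_, hp⟩

lemma Walk.exists_adj_mem_branch (p : G.Walk w t) (hw : w ∈ G.branch t c) :
    ∃ s ∈ G.branch t c, G.Adj s t := by
  induction p with
  | nil => exact (notMem_branch_self _ hw).elim
  | @cons w u t hwu p ih =>
    by_cases hu : u = t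
    · exact ⟨w, hw, hu ▸ hwu⟩
    · exact ih (mem_branch_of_adj hw hu hwu.symm)

lemma Connected.exists_adj_mem_branch (hG : G.Connected)
    (c : (G.induce {s | s ≠ t}).ConnectedComponent) : ∃ s ∈ G.branch t c, G.Adj s t := by
  obtain ⟨⟨x, hx⟩, hxc⟩ := c.exists_rep
  exact (hG.preconnected x t).some.exists_adj_mem_branch (mem_branch_iff.2 ⟨hx, hxc⟩)

lemma Connected.mem_branch_or_mem_branch (hG : G.Connected) (hst : G.Adj s t) (v : V) :
    v ∈ G.branch t ((G.induce {x | x ≠ t}).connectedComponentMk ⟨s, hst.ne⟩) ∨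
      v ∈ G.branch s ((G.induce {x | x ≠ s}).connectedComponentMk ⟨t, hst.ne.symm⟩) := by
  obtain ⟨p⟩ := hG.preconnected v t
  induction p with
  | nil => exact Or.inr (mem_branch_connectedComponentMk hst.ne.symm)
  | @cons v u t hvu p ih =>
    by_cases hvs : v = s
    · subst hvs
      exact Or.inl (mem_branch_connectedComponentMk hst.ne)
    by_cases hvt : v = t
    · subst hvt
      exact Or.inr (mem_branch_connectedComponentMk hst.ne.symm)
    exact (ih hst).imp (mem_branch_of_adj · hvt hvu) (mem_branch_of_adj · hvs hvu)

lemma IsAcyclic.disjoint_branch_branch (hG : G.IsAcyclic) (hst : G.Adj s t) :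
    Disjoint (G.branch t ((G.induce {x | x ≠ t}).connectedComponentMk ⟨s, hst.ne⟩))
      (G.branch s ((G.induce {x | x ≠ s}).connectedComponentMk ⟨t, hst.ne.symm⟩)) := by
  refine Set.disjoint_left.2 fun v hvs hvt => ?_
  obtain ⟨p, hp⟩ := exists_walk_of_mem_branch hvs (mem_branch_connectedComponentMk hst.ne)
  obtain ⟨q, hq⟩ := exists_walk_of_mem_branch hvt (mem_branch_connectedComponentMk hst.ne.symm)
  -- `s t` is a bridge, yet `p⁻¹ q` joins `s` to `t` without using it
  have hbridge := isBridge_iff_forall_walk_mem_edges.1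
    (isAcyclic_iff_forall_adj_isBridge.1 hG hst) (p.reverse.append q)
  rw [Walk.edges_append, Walk.edges_reverse, List.mem_append, List.mem_reverse] at hbridge
  rcases hbridge with h | h
  · exact hp (p.snd_mem_support_of_mem_edges h)
  · exact hq (q.fst_mem_support_of_mem_edges h)

theorem IsTree.exists_forall_compl_branch [Finite V] (hG : G.IsTree) {P : Set V → Prop}
    (hP : Monotone P) (hcompl : ∀ W, P W ∨ P Wᶜ) : ∃ t, ∀ c, P (G.branch t c)ᶜ := by
  by_contra! h
  obtain ⟨t₀⟩ := hG.connected.nonempty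
  obtain ⟨c₀, hc₀⟩ := h t₀
  obtain ⟨⟨t, c⟩, hbad, hmin⟩ := exists_minimalFor_of_wellFoundedLT
    (fun i : Σ t, (G.induce {s | s ≠ t}).ConnectedComponent => ¬ P (G.branch i.1 i.2)ᶜ)
    (fun i => G.branch i.1 i.2) ⟨⟨t₀, c₀⟩, hc₀⟩
  obtain ⟨s, hs, hst⟩ := hG.connected.exists_adj_mem_branch c
  obtain ⟨_, hsc⟩ := mem_branch_iff.1 hs
  obtain ⟨c', hbad'⟩ := h s
  have hc' : P (G.branch s c') := (hcompl _).resolve_right hbad'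
  by_cases hc't : c' = (G.induce {x | x ≠ s}).connectedComponentMk ⟨t, hst.ne.symm⟩
  · subst hc't
    refine hbad (hP ?_ hc')
    exact hsc ▸ (hG.isAcyclic.disjoint_branch_branch hst).subset_compl_left
  · have hlt : G.branch s c' ⊂ G.branch t c := by
      refine ⟨fun v hv => hsc ▸ ?_, fun hsub => notMem_branch_self c' (hsub hs)⟩
      exact (hG.connected.mem_branch_or_mem_branch hst v).resolve_right
        ((disjoint_branch hc't).notMem_of_mem_left hv)
    exact hlt.not_ge (hmin (j := ⟨s, c'⟩) hbad' hlt.le)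

end SimpleGraph

namespace Matroid

variable {α β : Type*} {M : Matroid α} {R : Set α} {T : SimpleGraph β} {τ : β → Set α}

lemma exists_treeDecomp_nodeWidth_le_mRk (M : Matroid α) :
    ∃ (β : Type) (T : SimpleGraph β) (τ : β → Set α),
      Finite β ∧ M.IsTreeDecomp T τ ∧ ∀ t, M.nodeWidth T τ t ≤ (M.mRk : ℤ) := by
  refine ⟨Unit, ⊥, fun _ => M.E, inferInstance, ⟨.of_subsingleton, fun x hx => ⟨(), hx⟩⟩,
    fun t => ?_⟩
  have : IsEmpty {s : Unit | s ≠ t} := ⟨fun s => s.2 rfl⟩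
  rw [nodeWidth, finsum_of_isEmpty, Nat.card_of_isEmpty]
  simp

lemma mRank_le_nodeWidth [M.RankFinite] [Finite β] (hτ : ∀ x ∈ M.E, ∃ t, x ∈ τ t) {t : β}
    (hR : ∀ c, R ⊆ M.closure (⋃ v ∈ (T.branch t c)ᶜ, τ v)) :
    (M.mRank R : ℤ) ≤ M.nodeWidth T τ t := by
  classical
  let C := (T.induce {s | s ≠ t}).ConnectedComponent
  have : Fintype C := Fintype.ofFinite C
  let A (c : C) : Set α := ⋃ v ∈ (T.branch t c)ᶜ, τ v
  have hcover : ((Finset.univ : Finset C) : Set C).Pairwise fun c c' => M.E ⊆ A c ∪ A c' := by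
    intro c _ c' _ hcc' x hx
    obtain ⟨v, hv⟩ := hτ x hx
    have hv' : v ∈ (T.branch t c)ᶜ ∪ (T.branch t c')ᶜ := by
      rw [← compl_inter, (SimpleGraph.disjoint_branch hcc').inter_eq, compl_empty]
      trivial
    exact hv'.imp (mem_biUnion · hv) (mem_biUnion · hv)
  have hRA : M.eRk R ≤ M.eRk (⋂ c ∈ (Finset.univ : Finset C), M.closure (A c)) :=
    M.eRk_mono (subset_iInter₂ fun c _ => hR c)
  have hle : M.mRank R + Fintype.card C * M.mRk ≤ ∑ c, M.mRank (A c) + M.mRk := by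
    rw [← Nat.cast_le (α := ℕ∞)]
    push_cast [cast_mRank, cast_mRk]
    exact (add_le_add_left hRA _).trans (M.eRk_biInter_closure_add_card_mul_le A _ hcover)
  rw [nodeWidth, finsum_eq_sum_of_fintype, Nat.card_eq_fintype_card]
  simp_rw [← SimpleGraph.biUnion_compl_branch]
  linarith [(Nat.cast_le (α := ℤ)).2 hle]

end Matroid

theorem rank_round_flat_le_treeWidth_general {α : Type*} (M : Matroid α) [M.Finite] (R : Set α)
    (hround : M.RoundSet R) :
    M.mRank R ≤ M.treeWidth := by
  refine le_csInf ⟨_, M.exists_treeDecomp_nodeWidth_le_mRk⟩ ?_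
  rintro n ⟨β, T, τ, hβ, ⟨hT, hτ⟩, hwidth⟩
  have hR : ∀ W : Set β, R ⊆ (⋃ v ∈ W, τ v) ∪ ⋃ v ∈ Wᶜ, τ v := fun W x hx => by
    obtain ⟨v, hv⟩ := hτ x (hround.1 hx)
    by_cases hvW : v ∈ W
    exacts [Or.inl (mem_biUnion hvW hv), Or.inr (mem_biUnion hvW hv)]
  obtain ⟨t, ht⟩ := hT.exists_forall_compl_branch (P := fun W => R ⊆ M.closure (⋃ v ∈ W, τ v))
    (fun W W' hWW' hW => hW.trans (M.closure_subset_closure (biUnion_subset_biUnion_left hWW')))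
    (fun W => hround.subset_closure_or_subset_closure (hR W))
  exact_mod_cast (mRank_le_nodeWidth hτ ht).trans (hwidth t)

/-- If `R` is a round flat of a matroid `M`, then the tree-width of `M` is at least `r R`. -/
theorem rank_round_flat_le_treeWidth {α : Type*} (M : Matroid α) [M.Finite] (R : Set α)
    (hflat : M.IsFlat R) (hround : M.RoundSet R) :
    M.mRank R ≤ M.treeWidth :=
  rank_round_flat_le_treeWidth_general M R hround
end

section
/- Let F be a modular flat of a matroid M and let C be a circuit of M such that C ∩ F is non-empty and C is not contained in F. Then cl(C−F) ∩ F is non-empty. -/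
open Set

/-! If `cl (C − F)` missed `F`, modularity of `F` applied to the flat `cl (C − F)` would make
`C − F` skew to `F`: `r (F ∪ C) = r F + |C − F|`. But `C ∩ F` is independent, so
submodularity gives `r (F ∪ C) + |C ∩ F| ≤ r F + r C = r F + |C| - 1`, one less. -/

namespace Matroid

variable {α : Type*} {M : Matroid α} {C F X : Set α}

lemma Circ.isCircuit (hC : M.Circ C) : M.IsCircuit C :=
  isCircuit_iff_forall_ssubset.2 ⟨⟨hC.2.1, hC.1⟩, hC.2.2⟩

lemma IsRkFinite.cast_mRank_eq (hX : M.IsRkFinite X) : (M.mRank X : ℕ∞) = M.eRk X := by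
  obtain ⟨I, hI, hIfin⟩ := hX.exists_finite_isBasis'
  have hgreatest : IsGreatest {n : ℕ | ∃ J, M.Indep J ∧ J ⊆ X ∧ J.ncard = n} I.ncard := by
    refine ⟨⟨I, hI.indep, hI.subset, rfl⟩, ?_⟩
    rintro _ ⟨J, hJ, hJX, rfl⟩
    have hJI : J.encard ≤ I.encard := hI.encard_eq_eRk ▸ hJ.encard_le_eRk_of_subset hJX
    rwa [← (hX.finite_of_indep_subset hJ hJX).cast_ncard_eq, ← hIfin.cast_ncard_eq,
      Nat.cast_le] at hJI
  rw [mRank, hgreatest.csSup_eq, hIfin.cast_ncard_eq, hI.encard_eq_eRk]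

lemma IsModularFlat.eRk_union_eq_add_of_disjoint_closure [M.RankFinite]
    (hF : M.IsModularFlat F) (hFX : Disjoint F (M.closure X)) :
    M.eRk (F ∪ X) = M.eRk F + M.eRk X := by
  have hmod := congrArg ((↑) : ℕ → ℕ∞) (hF.2 _ (M.isFlat_closure X))
  simp only [Nat.cast_add, (M.isRkFinite_set _).cast_mRank_eq, hFX.inter_eq, eRk_empty,
    add_zero, eRk_closure_eq, eRk_union_closure_right_eq] at hmod
  exact hmod.symm

lemma IsCircuit.eRk_union_lt [M.RankFinite] (hC : M.IsCircuit C) (hmeet : (C ∩ F).Nonempty)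
    (hnsub : ¬ C ⊆ F) : M.eRk (F ∪ C) < M.eRk F + M.eRk (C \ F) := by
  have hdiff : M.Indep (C \ F) := hC.ssubset_indep (sdiff_ssubset_left_iff.2 hmeet)
  have hinter : M.Indep (C ∩ F) := hC.ssubset_indep (inter_ssubset_left_iff.2 hnsub)
  have hinter_fin : (C ∩ F).encard ≠ ⊤ := (hC.finite.inter_of_left F).encard_lt_top.ne
  have hF_fin : M.eRk F ≠ ⊤ := (M.isRkFinite_set F).eRk_lt_top.ne
  have hsubmod : (C ∩ F).encard + M.eRk (F ∪ C) ≤ M.eRk F + M.eRk C := by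
    simpa only [inter_comm F C, hinter.eRk_eq_encard] using M.eRk_inter_add_eRk_union_le F C
  rw [hdiff.eRk_eq_encard, ← ENat.add_lt_add_iff_left hinter_fin]
  calc (C ∩ F).encard + M.eRk (F ∪ C) ≤ M.eRk F + M.eRk C := hsubmod
    _ < M.eRk F + C.encard := (ENat.add_lt_add_iff_left hF_fin).2 hC.dep.eRk_lt_encard
    _ = (C ∩ F).encard + (M.eRk F + (C \ F).encard) := by
      rw [← encard_sdiff_add_encard_inter C F]
      ring

end Matroid

open Matroid

/-- If `F` is a modular flat and `C` is a circuit meeting `F` but not contained in `F`, then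
`cl (C − F) ∩ F` is non-empty. -/
theorem closure_diff_inter_modular_flat_nonempty {α : Type*} (M : Matroid α) [M.Finite]
    (F C : Set α) (hF : M.IsModularFlat F) (hC : M.Circ C)
    (hmeet : (C ∩ F).Nonempty) (hnsub : ¬ C ⊆ F) :
    (M.closure (C \ F) ∩ F).Nonempty := by
  rw [← not_disjoint_iff_nonempty_inter, disjoint_comm]
  intro hdisj
  have hskew := hF.eRk_union_eq_add_of_disjoint_closure hdisj
  rw [union_sdiff_self] at hskew
  exact (hC.isCircuit.eRk_union_lt hmeet hnsub).ne hskew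
end

section
/- Let H be a modular hyperplane of a matroid M, let X ⊆ E(M)−H, and let P be the union of the projections P_H(x,y) over all pairs of distinct rank-one flats x, y spanned by elements of X. If U ⊆ H contains P, then cl(U) = cl(U ∪ X) ∩ H. -/
open Set

/-!
Fix `a ∈ X`. For `b ∈ X` with `b ∉ cl {a}`, modularity of `H` against the line `cl {a, b}`
gives `r (H ∩ cl {a, b}) = r H + 2 - r M = 1`, and since `cl {a} ∩ H` consists of loops, the
projection `H ∩ cl {a, b} ⊆ U` contains a point `p ∉ cl {a}`; by exchange `b ∈ cl {a, p}`.
Hence `cl (U ∪ X) = cl (U ∪ {a})`, and a flat `H ⊇ U` avoiding `a` meets `cl (U ∪ {a})`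
exactly in `cl U`.
-/

namespace Matroid

variable {α : Type*} {M : Matroid α} {F U X Y : Set α} {a b e : α}

lemma IsFlat.closure_insert_inter_eq (hF : M.IsFlat F) (hUF : U ⊆ F) (ha : a ∉ F) :
    M.closure (insert a U) ∩ F = M.closure U := by
  refine subset_antisymm ?_
    (subset_inter (M.closure_subset_closure (subset_insert a U))
      (hF.closure ▸ M.closure_subset_closure hUF))
  rintro z ⟨hz, hzF⟩
  by_contra hzU
  exact ha (hF.closure ▸ M.closure_subset_closure (insert_subset hzF hUF)
    (mem_closure_insert hzU hz))

section RankFinite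

variable [M.RankFinite]

lemma cast_mRank_eq_eRk (X : Set α) : (M.mRank X : ℕ∞) = M.eRk X := by
  obtain ⟨I, hI⟩ := M.exists_isBasis' X
  have hmax : M.mRank X = I.ncard := by
    refine IsGreatest.csSup_eq ⟨⟨I, hI.indep, hI.subset, rfl⟩, ?_⟩
    rintro _ ⟨J, hJ, hJX, rfl⟩
    have hle := hJ.encard_le_eRk_of_subset hJX
    rw [← hI.encard_eq_eRk, ← hJ.finite.cast_ncard_eq, ← hI.indep.finite.cast_ncard_eq] at hle
    exact_mod_cast hle
  rw [hmax, hI.indep.finite.cast_ncard_eq, hI.encard_eq_eRk]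

lemma mRank_mono (hXY : X ⊆ Y) : M.mRank X ≤ M.mRank Y := by
  have h := M.eRk_mono hXY
  rwa [← cast_mRank_eq_eRk, ← cast_mRank_eq_eRk, Nat.cast_le] at h

lemma mRank_closure (X : Set α) : M.mRank (M.closure X) = M.mRank X := by
  have h := M.eRk_closure_eq X
  rwa [← cast_mRank_eq_eRk, ← cast_mRank_eq_eRk, Nat.cast_inj] at h

lemma mRank_insert_of_mem_diff_closure (he : e ∈ M.E \ M.closure X) :
    M.mRank (insert e X) = M.mRank X + 1 := by
  have h := eRk_insert_eq_add_one he
  rwa [← cast_mRank_eq_eRk, ← cast_mRank_eq_eRk, ← Nat.cast_one, ← Nat.cast_add,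
    Nat.cast_inj] at h

lemma IsNonloop.mRank_singleton (he : M.IsNonloop e) : M.mRank {e} = 1 := by
  have h := he.eRk_eq
  rwa [← cast_mRank_eq_eRk, Nat.cast_eq_one] at h

lemma mRank_eq_zero_of_subset_loops (hX : X ⊆ M.loops) : M.mRank X = 0 := by
  have h : M.eRk X = 0 := eRk_eq_zero_iff'.2 (inter_subset_left.trans hX)
  rwa [← cast_mRank_eq_eRk, Nat.cast_eq_zero] at h

lemma IsModularFlat.exists_mem_inter_closure_pair_notMem_closure {H : Set α}
    (hmod : M.IsModularFlat H) (hH : M.IsHyperplane H) (ha : a ∈ M.E \ H)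
    (hb : b ∈ M.E \ M.closure {a}) :
    ∃ p ∈ H ∩ M.closure {a, b}, p ∉ M.closure {a} := by
  set L := M.closure {a, b}
  have ha' : a ∈ M.E \ M.closure H := by rwa [hH.1.closure]
  have hL : M.mRank L = 2 := by
    rw [mRank_closure, pair_comm, mRank_insert_of_mem_diff_closure hb,
      (isNonloop_of_notMem_closure ha'.2 ha.1).mRank_singleton]
  have hHL : M.mRank (H ∪ L) = M.mRank H + 1 := by
    refine le_antisymm (hH.2 ▸ mRank_mono (union_subset hH.1.subset_ground
      (M.closure_subset_ground _))) ?_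
    rw [← mRank_insert_of_mem_diff_closure ha']
    exact mRank_mono (insert_subset (Or.inr (M.mem_closure_of_mem (mem_insert a {b})
      (pair_subset ha.1 hb.1))) subset_union_left)
  have hHL1 : M.mRank (H ∩ L) = 1 := by
    have := hmod.2 L (M.isFlat_closure _)
    omega
  by_contra! hsub
  -- `cl {a}` meets the flat `H ∌ a` only in loops.
  have hloops : H ∩ L ⊆ M.loops := by
    rw [← closure_empty, ← hH.1.closure_insert_inter_eq (empty_subset H) ha.2]
    exact fun p hp => ⟨by simpa using hsub p hp, hp.1⟩
  simp [mRank_eq_zero_of_subset_loops hloops] at hHL1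

lemma mem_closure_insert_of_projUnion_subset {H : Set α} (hmod : M.IsModularFlat H)
    (hH : M.IsHyperplane H) (hX : X ⊆ M.E \ H) (hP : M.projUnion H X ⊆ U)
    (haX : a ∈ X) (hbX : b ∈ X) : b ∈ M.closure (insert a U) := by
  by_cases hba : b ∈ M.closure {a}
  · exact M.closure_subset_closure (singleton_subset_iff.2 (mem_insert a U)) hba
  obtain ⟨p, ⟨hpH, hpL⟩, hpa⟩ :=
    hmod.exists_mem_inter_closure_pair_notMem_closure hH (hX haX) ⟨(hX hbX).1, hba⟩
  have hne : M.closure {a} ≠ M.closure {b} := fun h =>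
    hba (h ▸ M.mem_closure_self b (hX hbX).1)
  have hpU : p ∈ U := hP (mem_biUnion haX (mem_biUnion hbX (mem_iUnion_of_mem hne ⟨hpH, hpL⟩)))
  have hbap : b ∈ M.closure (insert p {a}) := mem_closure_insert hpa (by rwa [pair_comm] at hpL)
  exact M.closure_subset_closure (insert_subset (mem_insert_of_mem a hpU)
    (singleton_subset_iff.2 (mem_insert a U))) hbap

end RankFinite

end Matroid

open Matroid

/-- Let `H` be a modular hyperplane, `X ⊆ E(M) − H`, and `P` the union of the projections
`P_H(x, y)` over all pairs of distinct rank-one flats spanned by elements of `X`. If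
`P ⊆ U ⊆ H`, then `cl U = cl (U ∪ X) ∩ H`. -/
theorem closure_eq_closure_union_inter_hyperplane {α : Type*} (M : Matroid α) [M.Finite]
    (H X U : Set α) (hH : M.IsHyperplane H) (hmod : M.IsModularFlat H)
    (hX : X ⊆ M.E \ H) (hU : U ⊆ H) (hP : M.projUnion H X ⊆ U) :
    M.closure U = M.closure (U ∪ X) ∩ H := by
  obtain rfl | ⟨a, haX⟩ := X.eq_empty_or_nonempty
  · rw [union_empty, inter_eq_left.2 (hH.1.closure ▸ M.closure_subset_closure hU)]
  have hUX : M.closure (U ∪ X) = M.closure (insert a U) := by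
    refine subset_antisymm (M.closure_subset_closure_of_subset_closure (union_subset ?_ ?_))
      (M.closure_subset_closure (insert_subset (Or.inr haX) subset_union_left))
    · exact M.subset_closure_of_subset (subset_insert a U)
        (insert_subset (hX haX).1 (hU.trans hH.1.subset_ground))
    · exact fun b hbX => mem_closure_insert_of_projUnion_subset hmod hH hX hP haX hbX
  rw [hUX, hH.1.closure_insert_inter_eq hU (hX haX).2]
end

section
/- Let H be a modular hyperplane of a matroid M with complementary cocircuit C* = E(M)−H. If F is a round flat of M not contained in H, then F ⊆ cl(C*). -/
open Set

open Matroid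

/-! `F ∩ H` and `F ∩ cl(E − H)` are flats of `M ↾ F` whose union is `F`; since `F` is round,
one of them is all of `F`, and it cannot be `F ∩ H`. -/

namespace Matroid

variable {α : Type*} {M : Matroid α} {X G G₁ G₂ : Set α}

lemma IsFlat.restrict_inter (hG : M.IsFlat G) (hX : X ⊆ M.E) : (M ↾ X).IsFlat (X ∩ G) := by
  rw [isFlat_iff_closure_eq, restrict_closure_eq _ inter_subset_left hX]
  refine subset_antisymm (fun x hx => ⟨hx.2, ?_⟩)
    (subset_inter (M.subset_closure _) inter_subset_left)
  exact hG.closure ▸ M.closure_subset_closure inter_subset_right hx.1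

lemma RoundSet.subset_or_subset_of_subset_union (hX : M.RoundSet X) (hG₁ : M.IsFlat G₁)
    (hG₂ : M.IsFlat G₂) (hXG : X ⊆ G₁ ∪ G₂) : X ⊆ G₁ ∨ X ⊆ G₂ := by
  by_contra! hnot
  refine hX.2 (X ∩ G₁) (X ∩ G₂)
    ⟨⟨hG₁.restrict_inter hX.1, ?_⟩, ⟨hG₂.restrict_inter hX.1, ?_⟩, ?_⟩
  · exact hnot.1 ∘ inter_eq_left.1
  · exact hnot.2 ∘ inter_eq_left.1
  · rw [← inter_union_distrib_left, inter_eq_left.2 hXG, restrict_ground_eq]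

end Matroid

open Matroid

theorem round_flat_subset_closure_cocircuit_general {α : Type*} (M : Matroid α)
    (H F : Set α) (hH : M.IsHyperplane H)
    (hround : M.RoundSet F) (hnsub : ¬ F ⊆ H) :
    F ⊆ M.closure (M.E \ H) := by
  have hcover : F ⊆ H ∪ M.closure (M.E \ H) := fun x hx =>
    (em (x ∈ H)).imp id fun hxH => M.subset_closure _ sdiff_subset ⟨hround.1 hx, hxH⟩
  exact (hround.subset_or_subset_of_subset_union hH.1 (M.isFlat_closure _) hcover).resolve_left
    hnsub

/-- Let `H` be a modular hyperplane of `M` with complementary cocircuit `C* = E(M) − H`.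
Every round flat not contained in `H` is contained in `cl C*`. -/
theorem round_flat_subset_closure_cocircuit {α : Type*} (M : Matroid α) [M.Finite]
    (H F : Set α) (hH : M.IsHyperplane H) (hmod : M.IsModularFlat H)
    (hflat : M.IsFlat F) (hround : M.RoundSet F) (hnsub : ¬ F ⊆ H) :
    F ⊆ M.closure (M.E \ H) :=
  round_flat_subset_closure_cocircuit_general M H F hH hround hnsub
end
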